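/- arXiv:1005.3342 — 3 statements merged into one kernel-verified Lean document; each statement's English description precedes it below -/
import Mathlib

section
/- Let m = qn + r with q, r nonnegative integers, n a positive integer, and n/2 ≤ r < n. Then L(m,n) = m + n − r = n(q+1); that is, every A ∈ D(m,n) satisfies tdet A ≥ n(q+1), and there exists A ∈ D(m,n) with tdet A = n(q+1). -/
/-- D(m,n): n×n matrices with nonnegative integer entries, all row and column sums equal m. -/
def IsDSM (m n : ℕ) (A : Fin n → Fin n → ℕ) : Prop :=
  (∀ i, ∑ j, A i j = m) ∧ (∀ j, ∑ i, A i j = m)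

/-- tdet A: maximum of a transversal sum over all permutations. -/
def tdet {n : ℕ} (A : Fin n → Fin n → ℕ) : ℕ :=
  Finset.univ.sup fun σ : Equiv.Perm (Fin n) => ∑ i, A i (σ i)

/-!
By Egerváry's theorem `tdet A` is the least weight `∑ u + ∑ v` of an integer cover
`A i j ≤ u i + v j`. If `v` is smallest at `j₀`, column `j₀` gives `∑ u + n v j₀ ≥ m` and each
row `i` gives `n u i + ∑ v ≥ m`; with `m = q n + r` and `2 r ≥ n` these force weight
`≥ n (q + 1)`. The bound is attained by the circulant matrix with `q + 1` on `r` cyclic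
diagonals and `q` elsewhere: every entry is at most `q + 1` and the diagonal is all `q + 1`.
-/

open Finset

section Cover

variable {ι : Type*}

def IsCover (A : ι → ι → ℤ) (u v : ι → ℤ) : Prop :=
  ∀ i j, A i j ≤ u i + v j

variable {A : ι → ι → ℤ} {u v : ι → ℤ}

theorem IsCover.sub_add_indicator [DecidableEq ι] (h : IsCover A u v) (S N : Finset ι)
    (hN : ∀ i ∈ S, ∀ j, A i j = u i + v j → j ∈ N) :
    IsCover A (fun i => u i - if i ∈ S then 1 else 0)
      (fun j => v j + if j ∈ N then 1 else 0) := by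
  intro i j
  have hij := h i j
  dsimp only
  split_ifs with hi hj hj
  · omega
  · have := mt (hN i hi j) hj
    omega
  all_goals omega

variable [Fintype ι]

theorem IsCover.sum_le (h : IsCover A u v) (σ : Equiv.Perm ι) :
    ∑ i, A i (σ i) ≤ ∑ i, u i + ∑ j, v j :=
  calc ∑ i, A i (σ i) ≤ ∑ i, (u i + v (σ i)) := sum_le_sum fun i _ => h i (σ i)
    _ = ∑ i, u i + ∑ j, v j := by rw [sum_add_distrib, Equiv.sum_comp σ v]

theorem exists_isCover_min_weight (A : ι → ι → ℤ) :
    ∃ u v, IsCover A u v ∧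
      ∀ u' v', IsCover A u' v' → ∑ i, u i + ∑ j, v j ≤ ∑ i, u' i + ∑ j, v' j := by
  have hbdd : ∃ b, ∀ k, (∃ u v, IsCover A u v ∧ ∑ i, u i + ∑ j, v j = k) → b ≤ k :=
    ⟨∑ i, A i i, fun k ⟨u, v, h, hk⟩ => hk ▸ by simpa using h.sum_le 1⟩
  have hcover : IsCover A (fun i => ∑ j, |A i j|) 0 := fun i j => by
    simpa using (le_abs_self (A i j)).trans
      (single_le_sum (fun j _ => abs_nonneg (A i j)) (mem_univ j))
  obtain ⟨k, ⟨u, v, h, rfl⟩, hmin⟩ :=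
    Int.exists_least_of_bdd hbdd ⟨_, _, _, hcover, rfl⟩
  exact ⟨u, v, h, fun u' v' h' => hmin _ ⟨u', v', h', rfl⟩⟩

/-- Hall's condition for the equality graph of a cover of minimal weight: otherwise lowering `u`
by one on a violating set `S` and raising `v` by one on its neighbourhood gives a lighter cover. -/
theorem IsCover.card_le_card_tight (h : IsCover A u v)
    (hmin : ∀ u' v', IsCover A u' v' → ∑ i, u i + ∑ j, v j ≤ ∑ i, u' i + ∑ j, v' j)
    (S : Finset ι) : #S ≤ #{j | ∃ i ∈ S, A i j = u i + v j} := by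
  classical
  set N : Finset ι := {j | ∃ i ∈ S, A i j = u i + v j}
  by_contra! hNS
  have := hmin _ _ <| h.sub_add_indicator S N fun i hi j he =>
    mem_filter.2 ⟨mem_univ j, i, hi, he⟩
  simp only [sum_sub_distrib, sum_add_distrib, sum_boole, filter_mem_eq_inter, univ_inter] at this
  omega

/-- Egerváry's theorem. -/
theorem exists_isCover_sum_eq (A : ι → ι → ℤ) :
    ∃ (u v : ι → ℤ) (σ : Equiv.Perm ι),
      IsCover A u v ∧ ∑ i, A i (σ i) = ∑ i, u i + ∑ j, v j := by
  classical
  obtain ⟨u, v, h, hmin⟩ := exists_isCover_min_weight A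
  obtain ⟨f, hf, htight⟩ := (Fintype.all_card_le_filter_rel_iff_exists_injective
    fun i j => A i j = u i + v j).mp (h.card_le_card_tight hmin)
  let σ := Equiv.ofBijective f (Finite.injective_iff_bijective.mp hf)
  refine ⟨u, v, σ, h, ?_⟩
  calc ∑ i, A i (σ i) = ∑ i, (u i + v (σ i)) := sum_congr rfl fun i _ => htight i
    _ = ∑ i, u i + ∑ j, v j := by rw [sum_add_distrib, Equiv.sum_comp σ v]

end Cover

theorem sum_le_tdet {n : ℕ} (A : Fin n → Fin n → ℕ) (σ : Equiv.Perm (Fin n)) :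
    ∑ i, A i (σ i) ≤ tdet A :=
  le_sup (f := fun σ : Equiv.Perm (Fin n) => ∑ i, A i (σ i)) (mem_univ σ)

theorem tdet_le_of_le {n c : ℕ} {A : Fin n → Fin n → ℕ} (h : ∀ i j, A i j ≤ c) :
    tdet A ≤ n * c :=
  Finset.sup_le fun σ _ => (sum_le_sum fun i _ => h i (σ i)).trans (by simp)

theorem IsDSM.mul_succ_le_sum_cover {m n q r : ℕ} {A : Fin n → Fin n → ℕ} (hA : IsDSM m n A)
    (hm : m = q * n + r) (hr : n ≤ 2 * r) {u v : Fin n → ℤ}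
    (huv : IsCover (fun i j => (A i j : ℤ)) u v) :
    (n * (q + 1) : ℤ) ≤ ∑ i, u i + ∑ j, v j := by
  rcases Nat.eq_zero_or_pos n with rfl | hn
  · simp
  have : NeZero n := ⟨hn.ne'⟩
  obtain ⟨j₀, -, hj₀⟩ := exists_min_image univ v univ_nonempty
  have hm' : (m : ℤ) = q * n + r := by exact_mod_cast hm
  have hr' : (n : ℤ) ≤ 2 * r := by exact_mod_cast hr
  have hrow : ∀ i, (m : ℤ) ≤ n * u i + ∑ j, v j := fun i =>
    calc (m : ℤ) = ∑ j, (A i j : ℤ) := by rw [← hA.1 i]; push_cast; rfl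
      _ ≤ ∑ j, (u i + v j) := sum_le_sum fun j _ => huv i j
      _ = n * u i + ∑ j, v j := by simp [sum_add_distrib]
  have hcol : (m : ℤ) ≤ ∑ i, u i + n * v j₀ :=
    calc (m : ℤ) = ∑ i, (A i j₀ : ℤ) := by rw [← hA.2 j₀]; push_cast; rfl
      _ ≤ ∑ i, (u i + v j₀) := sum_le_sum fun i _ => huv i j₀
      _ = ∑ i, u i + n * v j₀ := by simp [sum_add_distrib]
  have hvmin : n * v j₀ ≤ ∑ j, v j := by
    simpa using card_nsmul_le_sum univ v (v j₀) hj₀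
  -- Either `v` exceeds its minimum by at least `n - r` in total, or, as `2 * r ≥ n`,
  -- every row forces `u i + v j₀ > q`.
  rcases le_or_gt ((n : ℤ) - r) (∑ j, v j - n * v j₀) with hv | hv
  · linarith
  · have hu : ∀ i, (q : ℤ) + 1 ≤ u i + v j₀ := fun i => by
      have : (n : ℤ) * q < n * (u i + v j₀) := by linarith [hrow i]
      have := lt_of_mul_lt_mul_left this (by positivity)
      omega
    have := card_nsmul_le_sum univ (fun i => u i + v j₀) _ fun i _ => hu i
    simp only [card_univ, Fintype.card_fin, nsmul_eq_mul, sum_add_distrib, sum_const] at this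
    linarith

theorem IsDSM.mul_succ_le_tdet {m n q r : ℕ} {A : Fin n → Fin n → ℕ} (hA : IsDSM m n A)
    (hm : m = q * n + r) (hr : n ≤ 2 * r) : n * (q + 1) ≤ tdet A := by
  obtain ⟨u, v, σ, huv, hσ⟩ := exists_isCover_sum_eq fun i j => (A i j : ℤ)
  have := hA.mul_succ_le_sum_cover hm hr huv
  have := sum_le_tdet A σ
  zify at *
  linarith

theorem Matrix.sum_circulant_row {κ α : Type*} [AddGroup κ] [Fintype κ] [AddCommMonoid α]
    (v : κ → α) (i : κ) : ∑ j, Matrix.circulant v i j = ∑ k, v k :=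
  (Equiv.subLeft i).sum_comp v

theorem Matrix.sum_circulant_col {κ α : Type*} [AddGroup κ] [Fintype κ] [AddCommMonoid α]
    (v : κ → α) (j : κ) : ∑ i, Matrix.circulant v i j = ∑ k, v k :=
  (Equiv.subRight j).sum_comp v

/-- Entry `q + 1` on the `r` cyclic diagonals `i - j ∈ {0, …, r - 1}` and `q` elsewhere. -/
def bandMatrix (n q r : ℕ) : Fin n → Fin n → ℕ :=
  Matrix.circulant fun k : Fin n => q + if (k : ℕ) < r then 1 else 0

theorem isDSM_bandMatrix {n r : ℕ} (q : ℕ) (hr : r ≤ n) :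
    IsDSM (q * n + r) n (bandMatrix n q r) := by
  rcases Nat.eq_zero_or_pos n with rfl | hn
  · simp_all [IsDSM]
  have : NeZero n := ⟨hn.ne'⟩
  have hsum : ∑ k : Fin n, (q + if (k : ℕ) < r then 1 else 0) = q * n + r := by
    simp [sum_add_distrib, Fin.card_filter_val_lt, hr, mul_comm]
  exact ⟨fun i => (Matrix.sum_circulant_row _ i).trans hsum,
    fun j => (Matrix.sum_circulant_col _ j).trans hsum⟩

theorem tdet_bandMatrix {n r : ℕ} (q : ℕ) (hr : 0 < r) :
    tdet (bandMatrix n q r) = n * (q + 1) := by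
  refine le_antisymm (tdet_le_of_le fun i j => ?_) ?_
  · simp only [bandMatrix, Matrix.circulant_apply]
    split_ifs <;> omega
  · have hdiag : ∀ i : Fin n, bandMatrix n q r i i = q + 1 := fun i => by
      have : NeZero n := ⟨i.pos.ne'⟩
      simp [bandMatrix, hr]
    simpa [hdiag, mul_comm] using sum_le_tdet (bandMatrix n q r) 1

theorem L_eq_large_r_general (m n q r : ℕ)
    (hm : m = q * n + r) (hr1 : n ≤ 2 * r) (hr2 : r < n) :
    (∀ A : Fin n → Fin n → ℕ, IsDSM m n A → n * (q + 1) ≤ tdet A) ∧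
    (∃ A : Fin n → Fin n → ℕ, IsDSM m n A ∧ tdet A = n * (q + 1)) ∧
    m + n - r = n * (q + 1) := by
  subst hm
  refine ⟨fun A hA => hA.mul_succ_le_tdet rfl hr1,
    ⟨bandMatrix n q r, isDSM_bandMatrix q hr2.le, tdet_bandMatrix q (by omega)⟩, ?_⟩
  rw [Nat.mul_succ, mul_comm]
  omega

/-- If m = qn + r with n/2 ≤ r < n, then L(m,n) = m + n - r = n(q+1). -/
theorem L_eq_large_r (m n q r : ℕ) (hn : 0 < n)
    (hm : m = q * n + r) (hr1 : n ≤ 2 * r) (hr2 : r < n) :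
    (∀ A : Fin n → Fin n → ℕ, IsDSM m n A → n * (q + 1) ≤ tdet A) ∧
    (∃ A : Fin n → Fin n → ℕ, IsDSM m n A ∧ tdet A = n * (q + 1)) ∧
    m + n - r = n * (q + 1) :=
  L_eq_large_r_general m n q r hm hr1 hr2
end

section
/- Let m = nq + r where q ≥ 1 and 0 < r < n, and assume n > 2r + rq. Let l be the smallest positive integer satisfying q·l² + l(2r + q) − rn ≥ 0. Then there exists a matrix A ∈ D(m,n) with tdet A ≤ nq + 2l + 1; in particular L(m,n) ≤ nq + 2l + 1. -/
open Finset

namespace Nat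

theorem card_filter_mod_Ico_add {n c j : ℕ} (hj : j < c) :
    #{k ∈ Ico n (n + c) | k % c = j} = 1 := by
  rw [← Finset.card_image_of_injOn ((mod_injOn_Ico n c).mono (coe_subset.2 (filter_subset _ _))),
    ← filter_image (p := (· = j)),
    image_Ico_mod, filter_eq' (range c) j, if_pos (mem_range.2 hj), card_singleton]

theorem card_filter_mod_Ico_add_mul {a c j : ℕ} (hj : j < c) (t : ℕ) :
    #{k ∈ Ico a (a + c * t) | k % c = j} = t := by
  induction t with
  | zero => simp
  | succ t ih =>
    rw [mul_add_one, ← add_assoc, ← Ico_union_Ico_eq_Ico (le_add_right a _) (le_add_right _ c),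
      filter_union, card_union_of_disjoint
        (disjoint_filter_filter (Ico_disjoint_Ico_consecutive _ _ _)),
      ih, card_filter_mod_Ico_add hj]

theorem card_filter_mod_Ico_le {a b c j t : ℕ} (hj : j < c) (hb : b ≤ a + c * t) :
    #{k ∈ Ico a b | k % c = j} ≤ t :=
  (card_le_card (filter_subset_filter _ (Ico_subset_Ico_right hb))).trans
    (card_filter_mod_Ico_add_mul hj t).le

theorem sum_card_filter_mod_Ico {c : ℕ} (hc : 0 < c) (a b : ℕ) :
    ∑ j ∈ range c, #{k ∈ Ico a b | k % c = j} = b - a := by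
  rw [← card_Ico a b]
  exact (card_eq_sum_card_fiberwise fun k _ => mem_range.2 (mod_lt k hc)).symm

end Nat

def chunkCount (P : ℕ → ℕ) (c i j : ℕ) : ℕ :=
  #{k ∈ Ico (P i) (P (i + 1)) | k % c = j}

theorem chunkCount_le {P : ℕ → ℕ} {c i j t : ℕ} (hj : j < c) (hP : P (i + 1) ≤ P i + c * t) :
    chunkCount P c i j ≤ t :=
  Nat.card_filter_mod_Ico_le hj hP

theorem sum_chunkCount_range_mod {c : ℕ} (hc : 0 < c) (P : ℕ → ℕ) (i : ℕ) :
    ∑ j ∈ range c, chunkCount P c i j = P (i + 1) - P i :=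
  Nat.sum_card_filter_mod_Ico hc _ _

theorem sum_chunkCount_range {P : ℕ → ℕ} (hP : Monotone P) (c j p : ℕ) :
    ∑ i ∈ range p, chunkCount P c i j = #{k ∈ Ico (P 0) (P p) | k % c = j} := by
  induction p with
  | zero => simp
  | succ p ih =>
    rw [sum_range_succ, ih, chunkCount, ← card_union_of_disjoint
        (disjoint_filter_filter (Ico_disjoint_Ico_consecutive _ _ _)), ← filter_union,
      Ico_union_Ico_eq_Ico (hP (Nat.zero_le p)) (hP (Nat.le_succ p))]

theorem tdet_le_sum_add_sum {n : ℕ} {A : Fin n → Fin n → ℕ} {f g : Fin n → ℕ}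
    (hA : ∀ i j, A i j ≤ f i + g j) : tdet A ≤ ∑ i, f i + ∑ j, g j :=
  Finset.sup_le fun σ _ => calc
    ∑ i, A i (σ i) ≤ ∑ i, (f i + g (σ i)) := sum_le_sum fun i _ => hA i (σ i)
    _ = ∑ i, f i + ∑ j, g j := by rw [sum_add_distrib, Equiv.sum_comp σ g]

theorem exists_isDSM_tdet_le {ι κ : Type*} [Fintype ι] [Fintype κ] {m n : ℕ}
    (hι : Fintype.card ι = n) (hκ : Fintype.card κ = n) {B : ι → κ → ℕ}
    (hrow : ∀ i, ∑ j, B i j = m) (hcol : ∀ j, ∑ i, B i j = m) {f : ι → ℕ} {g : κ → ℕ}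
    (hB : ∀ i j, B i j ≤ f i + g j) :
    ∃ A : Fin n → Fin n → ℕ, IsDSM m n A ∧ tdet A ≤ ∑ i, f i + ∑ j, g j := by
  let eι := (Fintype.equivFinOfCardEq hι).symm
  let eκ := (Fintype.equivFinOfCardEq hκ).symm
  refine ⟨fun i j => B (eι i) (eκ j), ⟨fun i => ?_, fun j => ?_⟩, ?_⟩
  · rw [Equiv.sum_comp eκ (B (eι i)), hrow]
  · rw [Equiv.sum_comp eι (fun i => B i (eκ j)), hcol]
  · rw [← Equiv.sum_comp eι f, ← Equiv.sum_comp eκ g]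
    exact tdet_le_sum_add_sum fun i j => hB _ _

theorem le_of_mul_le_quadratic {n q r l : ℕ} (hbig : 2 * r + r * q < n)
    (hineq : r * n ≤ q * l ^ 2 + l * (2 * r + q)) : r ≤ l := by
  by_contra! hlr
  have hl : l * (l + 1) ≤ r * r := Nat.mul_le_mul hlr.le hlr
  nlinarith

theorem add_le_of_minimal {n q r l : ℕ} (hr : 0 < r) (hbig : 2 * r + r * q < n) (hrl : r ≤ l)
    (hmin : ∀ l' : ℕ, 0 < l' → l' < l → q * l' ^ 2 + l' * (2 * r + q) < r * n) :
    l * q + l + r ≤ n := by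
  obtain rfl | hlt := hrl.eq_or_lt
  · linarith
  obtain ⟨k, rfl⟩ : ∃ k, l = k + 1 := ⟨l - 1, by omega⟩
  have hrk : r ≤ k := by omega
  have hk := hmin k (by omega) (by omega)
  have hkn : r * ((k + 1) * q + k + r) < r * n := by
    nlinarith [Nat.mul_le_mul_right (q * k + q + r) hrk]
  linarith [Nat.lt_of_mul_lt_mul_left hkn]

section BlockMatrix

variable (q r l d : ℕ)

def topCut (i : ℕ) : ℕ :=
  i * (d * r) / l

def rightCut (i : ℕ) : ℕ :=
  topCut r l d i + i * r

def leftLoad (j : ℕ) : ℕ :=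
  #{k ∈ Ico 0 (d * r) | k % (l + 1) = j}

def leftCut (j : ℕ) : ℕ :=
  ∑ j' ∈ range j, (leftLoad r l d j' + r)

def blockMatrix : Fin l ⊕ Fin (l + 1 + d) → Fin (l + 1) ⊕ Fin (l + d) → ℕ
  | .inl i, .inl j => q - chunkCount (topCut r l d) (l + 1) i j
  | .inl i, .inr j => q + chunkCount (rightCut r l d) (l + d) i j
  | .inr i, .inl j => q + chunkCount (leftCut r l d) (l + 1 + d) j i
  | .inr _, .inr _ => q

variable {q r l d}

theorem monotone_topCut : Monotone (topCut r l d) :=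
  fun _ _ h => Nat.div_le_div_right (Nat.mul_le_mul_right _ h)

theorem topCut_self (hl : 0 < l) : topCut r l d l = d * r :=
  Nat.mul_div_cancel_left _ hl

theorem topCut_succ_le {t : ℕ} (hl : 0 < l) (ht : d * r ≤ l * t) (i : ℕ) :
    topCut r l d (i + 1) ≤ topCut r l d i + t := calc
  (i + 1) * (d * r) / l ≤ (i * (d * r) + l * t) / l :=
    Nat.div_le_div_right (by rw [add_one_mul]; exact Nat.add_le_add_left ht _)
  _ = i * (d * r) / l + t := Nat.add_mul_div_left _ _ hl

theorem monotone_rightCut : Monotone (rightCut r l d) :=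
  monotone_topCut.add fun _ _ h => Nat.mul_le_mul_right r h

theorem rightCut_succ_sub (i : ℕ) :
    rightCut r l d (i + 1) - rightCut r l d i = topCut r l d (i + 1) - topCut r l d i + r := by
  have := monotone_topCut (r := r) (l := l) (d := d) (Nat.le_add_right i 1)
  simp only [rightCut, add_one_mul]
  omega

theorem leftCut_succ (j : ℕ) :
    leftCut r l d (j + 1) = leftCut r l d j + (leftLoad r l d j + r) :=
  sum_range_succ _ _

theorem monotone_leftCut : Monotone (leftCut r l d) :=
  monotone_nat_of_le_succ fun j => (leftCut_succ j).symm ▸ Nat.le_add_right _ _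

theorem sum_leftLoad : ∑ j ∈ range (l + 1), leftLoad r l d j = d * r :=
  Nat.sum_card_filter_mod_Ico (Nat.succ_pos l) 0 (d * r)

theorem leftCut_succ_self : leftCut r l d (l + 1) = (l + 1 + d) * r := by
  rw [leftCut, sum_add_distrib, sum_leftLoad]
  simp only [sum_const, card_range, smul_eq_mul]
  ring

theorem chunkCount_topCut_le (hl : 0 < l) (hT : d * r ≤ l * ((l + 1) * q)) {j : ℕ}
    (hj : j < l + 1) (i : ℕ) : chunkCount (topCut r l d) (l + 1) i j ≤ q :=
  chunkCount_le hj (topCut_succ_le hl hT i)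

theorem sum_chunkCount_topCut (hl : 0 < l) (j : ℕ) :
    ∑ i ∈ range l, chunkCount (topCut r l d) (l + 1) i j = leftLoad r l d j := by
  rw [sum_chunkCount_range monotone_topCut, topCut_self hl]
  simp [topCut, leftLoad]

theorem leftLoad_le (hT : d * r ≤ l * ((l + 1) * q)) {j : ℕ} (hj : j < l + 1) :
    leftLoad r l d j ≤ l * q :=
  Nat.card_filter_mod_Ico_le hj (by linarith)

theorem chunkCount_rightCut_le_one (hl : 0 < l) (hrl : r ≤ l) {j : ℕ} (hj : j < l + d)
    (i : ℕ) : chunkCount (rightCut r l d) (l + d) i j ≤ 1 := by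
  refine chunkCount_le hj ?_
  have := topCut_succ_le (r := r) hl (Nat.mul_le_mul_left d hrl |>.trans_eq (mul_comm d l)) i
  simp only [rightCut, add_one_mul]
  omega

theorem sum_chunkCount_rightCut (hl : 0 < l) {j : ℕ} (hj : j < l + d) :
    ∑ i ∈ range l, chunkCount (rightCut r l d) (l + d) i j = r := by
  rw [sum_chunkCount_range monotone_rightCut]
  have h0 : rightCut r l d 0 = 0 := by simp [rightCut, topCut]
  have hl' : rightCut r l d l = 0 + (l + d) * r := by
    rw [rightCut, topCut_self hl]; ring
  rw [h0, hl', Nat.card_filter_mod_Ico_add_mul hj]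

theorem chunkCount_leftCut_le_one (hT : d * r ≤ l * ((l + 1) * q))
    (hM : l * q + r ≤ l + 1 + d) {i j : ℕ} (hi : i < l + 1 + d) (hj : j < l + 1) :
    chunkCount (leftCut r l d) (l + 1 + d) j i ≤ 1 := by
  refine chunkCount_le hi ?_
  rw [leftCut_succ]
  have := leftLoad_le hT hj
  omega

theorem sum_chunkCount_leftCut {i : ℕ} (hi : i < l + 1 + d) :
    ∑ j ∈ range (l + 1), chunkCount (leftCut r l d) (l + 1 + d) j i = r := by
  rw [sum_chunkCount_range monotone_leftCut, leftCut_succ_self]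
  simpa [leftCut] using Nat.card_filter_mod_Ico_add_mul (a := 0) hi r

theorem blockMatrix_row_sum (hl : 0 < l) (hT : d * r ≤ l * ((l + 1) * q))
    (i : Fin l ⊕ Fin (l + 1 + d)) : ∑ j, blockMatrix q r l d i j = (2 * l + 1 + d) * q + r := by
  rcases i with i | i
  · simp only [Fintype.sum_sum_type, blockMatrix]
    rw [Fin.sum_univ_eq_sum_range (fun j => q - chunkCount (topCut r l d) (l + 1) i j),
      Fin.sum_univ_eq_sum_range (fun j => q + chunkCount (rightCut r l d) (l + d) i j),
      sum_tsub_distrib _ fun j hj => chunkCount_topCut_le hl hT (mem_range.1 hj) i,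
      sum_add_distrib, sum_chunkCount_range_mod (Nat.succ_pos l),
      sum_chunkCount_range_mod (by omega), rightCut_succ_sub]
    have hstep : topCut r l d (i + 1) - topCut r l d i ≤ (l + 1) * q := by
      have := topCut_succ_le hl hT i
      omega
    generalize topCut r l d (i + 1) - topCut r l d i = s at hstep ⊢
    simp only [sum_const, card_range, smul_eq_mul]
    zify [hstep]
    ring
  · simp only [Fintype.sum_sum_type, blockMatrix]
    rw [Fin.sum_univ_eq_sum_range (fun j => q + chunkCount (leftCut r l d) (l + 1 + d) j i),
      sum_add_distrib, sum_chunkCount_leftCut i.isLt]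
    simp only [sum_const, card_univ, card_range, Fintype.card_fin, smul_eq_mul]
    ring

theorem blockMatrix_col_sum (hl : 0 < l) (hT : d * r ≤ l * ((l + 1) * q))
    (j : Fin (l + 1) ⊕ Fin (l + d)) : ∑ i, blockMatrix q r l d i j = (2 * l + 1 + d) * q + r := by
  rcases j with j | j
  · simp only [Fintype.sum_sum_type, blockMatrix]
    rw [Fin.sum_univ_eq_sum_range (fun i => q - chunkCount (topCut r l d) (l + 1) i j),
      Fin.sum_univ_eq_sum_range (fun i => q + chunkCount (leftCut r l d) (l + 1 + d) j i),
      sum_tsub_distrib _ fun i _ => chunkCount_topCut_le hl hT j.isLt i,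
      sum_add_distrib, sum_chunkCount_topCut hl, sum_chunkCount_range_mod (by omega),
      leftCut_succ, Nat.add_sub_cancel_left]
    have hload := leftLoad_le (r := r) (d := d) hT j.isLt
    simp only [sum_const, card_range, smul_eq_mul]
    zify [hload]
    ring
  · simp only [Fintype.sum_sum_type, blockMatrix]
    rw [Fin.sum_univ_eq_sum_range (fun i => q + chunkCount (rightCut r l d) (l + d) i j),
      sum_add_distrib, sum_chunkCount_rightCut hl j.isLt]
    simp only [sum_const, card_univ, card_range, Fintype.card_fin, smul_eq_mul]
    ring

theorem blockMatrix_le (hl : 0 < l) (hrl : r ≤ l) (hT : d * r ≤ l * ((l + 1) * q))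
    (hM : l * q + r ≤ l + 1 + d) (i : Fin l ⊕ Fin (l + 1 + d)) (j : Fin (l + 1) ⊕ Fin (l + d)) :
    blockMatrix q r l d i j ≤ Sum.elim (fun _ => 1) (fun _ => 0) i +
      Sum.elim (fun _ => q + 1) (fun _ => q) j := by
  rcases i with i | i <;> rcases j with j | j <;> simp only [blockMatrix, Sum.elim_inl, Sum.elim_inr]
  · omega
  · have := chunkCount_rightCut_le_one (r := r) hl hrl j.isLt i
    omega
  · have := chunkCount_leftCut_le_one hT hM i.isLt j.isLt
    omega
  · omega

end BlockMatrix

theorem upper_bound_odd_general (m n q r l : ℕ) (hq : 1 ≤ q)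
    (hm : m = n * q + r) (hr1 : 0 < r) (hbig : 2 * r + r * q < n)
    (hl : 0 < l) (hineq : r * n ≤ q * l ^ 2 + l * (2 * r + q))
    (hmin : ∀ l' : ℕ, 0 < l' → l' < l → q * l' ^ 2 + l' * (2 * r + q) < r * n) :
    ∃ A : Fin n → Fin n → ℕ, IsDSM m n A ∧ tdet A ≤ n * q + 2 * l + 1 := by
  have hrl := le_of_mul_le_quadratic hbig hineq
  have hn := add_le_of_minimal hr1 hbig hrl hmin
  obtain ⟨d, rfl⟩ : ∃ d, n = 2 * l + 1 + d :=
    ⟨n - (2 * l + 1), by have := Nat.le_mul_of_pos_right l hq; omega⟩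
  have hT : d * r ≤ l * ((l + 1) * q) := by nlinarith
  have hM : l * q + r ≤ l + 1 + d := by linarith
  obtain ⟨A, hA, hAt⟩ := exists_isDSM_tdet_le (n := 2 * l + 1 + d)
    (by simp only [Fintype.card_sum, Fintype.card_fin]; omega)
    (by simp only [Fintype.card_sum, Fintype.card_fin]; omega)
    (blockMatrix_row_sum hl hT) (blockMatrix_col_sum hl hT) (blockMatrix_le hl hrl hT hM)
  refine ⟨A, hm ▸ hA, hAt.trans_eq ?_⟩
  simp only [Fintype.sum_sum_type, Sum.elim_inl, Sum.elim_inr, sum_const, card_univ,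
    Fintype.card_fin, smul_eq_mul]
  ring

/-- If m = nq + r, q ≥ 1, 0 < r < n, n > 2r + rq, and l is the smallest positive integer
with q·l² + l(2r + q) - rn ≥ 0, then there is A ∈ D(m,n) with tdet A ≤ nq + 2l + 1. -/
theorem upper_bound_odd (m n q r l : ℕ) (hq : 1 ≤ q)
    (hm : m = n * q + r) (hr1 : 0 < r) (hr2 : r < n) (hbig : 2 * r + r * q < n)
    (hl : 0 < l) (hineq : r * n ≤ q * l ^ 2 + l * (2 * r + q))
    (hmin : ∀ l' : ℕ, 0 < l' → l' < l → q * l' ^ 2 + l' * (2 * r + q) < r * n) :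
    ∃ A : Fin n → Fin n → ℕ, IsDSM m n A ∧ tdet A ≤ n * q + 2 * l + 1 :=
  upper_bound_odd_general m n q r l hq hm hr1 hbig hl hineq hmin
end

section
/- Let m = qn + r with q, r nonnegative integers and n a positive integer. If 0 ≤ r < n/2, then U(m,n) = qn; if n/2 ≤ r < n, then U(m,n) = qn + 2r − n. In each case this means: every A ∈ D(m,n) satisfies tropdet A at most the stated value, and there exists A ∈ D(m,n) whose tropdet equals the stated value. -/
/-- tropdet A: minimum of a transversal sum over all permutations. -/
def tropdet {n : ℕ} (A : Fin n → Fin n → ℕ) : ℕ :=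
  Finset.univ.inf' Finset.univ_nonempty fun σ : Equiv.Perm (Fin n) => ∑ i, A i (σ i)

/-!
If `σ` is an optimal permutation, exchanging `σ i` and `σ j` cannot lower the transversal sum;
summing this over `j` gives `n * A i (σ i) + tropdet A ≤ 2m`. So either every entry of the optimal
transversal is at most `q`, and `tropdet A ≤ qn`, or one of them is at least `q + 1`, and
`tropdet A ≤ 2m - (q + 1)n = qn + 2r - n`.

Both bounds are attained by `q + (r • 1 ⊕ J)`, with `J` the `r × r` all-ones block: a permutation
sends at most `n - r` of the rows of `J` outside its columns, so it meets at least `2r - n` ones,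
and the cyclic shift by `r` meets exactly that many.
-/

open Finset Equiv

theorem Fin.card_filter_le_val (n k : ℕ) : #{i : Fin n | k ≤ (i : ℕ)} = n - k := by
  have := card_filter_add_card_filter_not (s := (univ : Finset (Fin n))) fun i => (i : ℕ) < k
  simp only [Fin.card_filter_val_lt, not_lt, card_univ, Fintype.card_fin] at this
  omega

theorem Finset.card_le_card_filter_apply_mem_add_card_compl {ι : Type*} [Fintype ι]
    [DecidableEq ι] (σ : Perm ι) (s : Finset ι) : #s ≤ #{i ∈ s | σ i ∈ s} + #sᶜ := by
  rw [← card_filter_add_card_filter_not (s := s) fun i => σ i ∈ s]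
  refine Nat.add_le_add_left (card_le_card_of_injOn σ (fun i hi => ?_) σ.injective.injOn) _
  simp only [coe_filter, Set.mem_ofPred_eq] at hi
  simpa using hi.2

section

variable {n : ℕ} {A : Fin n → Fin n → ℕ}

theorem tropdet_le_sum (A : Fin n → Fin n → ℕ) (σ : Perm (Fin n)) :
    tropdet A ≤ ∑ i, A i (σ i) :=
  inf'_le _ (mem_univ σ)

theorem le_tropdet {c : ℕ} (h : ∀ σ : Perm (Fin n), c ≤ ∑ i, A i (σ i)) : c ≤ tropdet A :=
  le_inf' _ _ fun σ _ => h σ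

theorem exists_tropdet_eq_sum (A : Fin n → Fin n → ℕ) :
    ∃ σ : Perm (Fin n), tropdet A = ∑ i, A i (σ i) := by
  obtain ⟨σ, -, hσ⟩ := exists_mem_eq_inf' univ_nonempty fun σ : Perm (Fin n) => ∑ i, A i (σ i)
  exact ⟨σ, hσ⟩

theorem tropdet_const_add (A : Fin n → Fin n → ℕ) (q : ℕ) :
    tropdet (fun i j => q + A i j) = q * n + tropdet A := by
  have sum_eq (σ : Perm (Fin n)) : ∑ i, (q + A i (σ i)) = q * n + ∑ i, A i (σ i) := by
    simp [sum_add_distrib, mul_comm]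
  obtain ⟨σ, hσ⟩ := exists_tropdet_eq_sum A
  obtain ⟨τ, hτ⟩ := exists_tropdet_eq_sum fun i j => q + A i j
  refine le_antisymm ?_ ?_
  · exact (tropdet_le_sum _ σ).trans_eq (by rw [sum_eq, hσ])
  · rw [hτ, sum_eq]
    exact Nat.add_le_add_left (tropdet_le_sum A τ) _

theorem isDSM_const_add {r : ℕ} (hA : IsDSM r n A) (q : ℕ) :
    IsDSM (q * n + r) n fun i j => q + A i j := by
  refine ⟨fun i => ?_, fun j => ?_⟩ <;> simp [sum_add_distrib, hA.1, hA.2, mul_comm]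

theorem add_le_add_of_tropdet_eq_sum {σ : Perm (Fin n)} (hσ : tropdet A = ∑ i, A i (σ i))
    (i j : Fin n) : A i (σ i) + A j (σ j) ≤ A i (σ j) + A j (σ i) := by
  rcases eq_or_ne i j with rfl | hij
  · rfl
  have split (τ : Perm (Fin n)) :
      ∑ k, A k (τ k) = ∑ k ∈ {i, j}ᶜ, A k (τ k) + (A i (τ i) + A j (τ j)) := by
    rw [← sum_pair (f := fun k => A k (τ k)) hij, sum_compl_add_sum]
  have off_pair : ∑ k ∈ {i, j}ᶜ, A k ((σ * swap i j) k) = ∑ k ∈ {i, j}ᶜ, A k (σ k) := by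
    refine sum_congr rfl fun k hk => ?_
    simp only [mem_compl, mem_insert, mem_singleton, not_or] at hk
    rw [Perm.mul_apply, swap_apply_of_ne_of_ne hk.1 hk.2]
  have := tropdet_le_sum A (σ * swap i j)
  rw [hσ, split, split, off_pair] at this
  simpa [swap_apply_left, swap_apply_right] using this

theorem mul_add_tropdet_le {m : ℕ} (hA : IsDSM m n A) {σ : Perm (Fin n)}
    (hσ : tropdet A = ∑ i, A i (σ i)) (i : Fin n) : n * A i (σ i) + tropdet A ≤ 2 * m := by
  have := sum_le_sum fun j (_ : j ∈ univ) => add_le_add_of_tropdet_eq_sum hσ i j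
  rw [sum_add_distrib, sum_add_distrib, sum_const, card_univ, Fintype.card_fin, smul_eq_mul,
    ← hσ, Equiv.sum_comp σ (A i), hA.1 i, hA.2 (σ i)] at this
  omega

theorem tropdet_le_or {m : ℕ} (hA : IsDSM m n A) (q : ℕ) :
    tropdet A ≤ q * n ∨ tropdet A + (q + 1) * n ≤ 2 * m := by
  obtain ⟨σ, hσ⟩ := exists_tropdet_eq_sum A
  by_cases hle : ∀ i, A i (σ i) ≤ q
  · left
    calc tropdet A = ∑ i, A i (σ i) := hσ
      _ ≤ ∑ _i : Fin n, q := sum_le_sum fun i _ => hle i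
      _ = q * n := by simp [mul_comm]
  · right
    push Not at hle
    obtain ⟨i, hi⟩ := hle
    calc tropdet A + (q + 1) * n ≤ tropdet A + n * A i (σ i) := by rw [mul_comm]; gcongr; exact hi
      _ ≤ 2 * m := by rw [add_comm]; exact mul_add_tropdet_le hA hσ i

end

/-- The block matrix `r • 1 ⊕ J`: the scalar block on the first `n - r` indices, the all-ones
block on the last `r`. -/
def blockScalarOnes (n r : ℕ) : Fin n → Fin n → ℕ := fun i j =>
  (if i = j ∧ (i : ℕ) < n - r then r else 0) + (if n - r ≤ (i : ℕ) ∧ n - r ≤ (j : ℕ) then 1 else 0)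

theorem blockScalarOnes_comm (n r : ℕ) (i j : Fin n) :
    blockScalarOnes n r i j = blockScalarOnes n r j i := by
  unfold blockScalarOnes
  congr 1
  · by_cases h : i = j <;> simp [h, eq_comm]
  · simp [and_comm]

theorem isDSM_blockScalarOnes {n r : ℕ} (hr : r ≤ n) : IsDSM r n (blockScalarOnes n r) := by
  have row (i : Fin n) : ∑ j, blockScalarOnes n r i j = r := by
    by_cases hi : (i : ℕ) < n - r
    · simp [blockScalarOnes, hi, not_le.mpr hi]
    · simp only [blockScalarOnes, sum_add_distrib, hi, not_lt.mp hi, and_false, if_false,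
        sum_const_zero, true_and, sum_boole, Fin.card_filter_le_val, Nat.cast_id]
      omega
  exact ⟨row, fun j => by simpa only [blockScalarOnes_comm n r _ j] using row j⟩

theorem tropdet_blockScalarOnes {n r : ℕ} (hr : r < n) :
    tropdet (blockScalarOnes n r) = 2 * r - n := by
  refine le_antisymm ?_ (le_tropdet fun σ => ?_)
  · have : NeZero n := ⟨by omega⟩
    have entry (i : Fin n) :
        blockScalarOnes n r i (i + ⟨r, hr⟩) = if 2 * (n - r) ≤ (i : ℕ) then 1 else 0 := by
      have hval : ((i + ⟨r, hr⟩ : Fin n) : ℕ) = if n ≤ i + r then i + r - n else i + r :=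
        Fin.val_add_eq_ite _ _
      have := i.isLt
      simp only [blockScalarOnes, Fin.ext_iff, hval]
      split_ifs at hval ⊢ <;> omega
    calc tropdet (blockScalarOnes n r)
        ≤ ∑ i, blockScalarOnes n r i (Equiv.addRight ⟨r, hr⟩ i) := tropdet_le_sum _ _
      _ = #{i : Fin n | 2 * (n - r) ≤ (i : ℕ)} := by simp [entry]
      _ = 2 * r - n := by rw [Fin.card_filter_le_val]; omega
  · set s : Finset (Fin n) := {i | n - r ≤ (i : ℕ)}
    have hs : #s = r := by rw [Fin.card_filter_le_val]; omega
    have hsc : #sᶜ = n - r := by rw [card_compl, hs, Fintype.card_fin]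
    have := card_le_card_filter_apply_mem_add_card_compl σ s
    calc 2 * r - n ≤ #{i ∈ s | σ i ∈ s} := by omega
      _ = ∑ i : Fin n, if n - r ≤ (i : ℕ) ∧ n - r ≤ (σ i : ℕ) then 1 else 0 := by
          rw [sum_boole, Nat.cast_id, filter_filter]; simp [s]
      _ ≤ ∑ i, blockScalarOnes n r i (σ i) := sum_le_sum fun i _ => le_add_self

theorem U_eq_general (m n q r : ℕ) (hm : m = q * n + r) (hr : r < n) :
    (2 * r < n →
      (∀ A : Fin n → Fin n → ℕ, IsDSM m n A → tropdet A ≤ q * n) ∧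
      (∃ A : Fin n → Fin n → ℕ, IsDSM m n A ∧ tropdet A = q * n)) ∧
    (n ≤ 2 * r →
      (∀ A : Fin n → Fin n → ℕ, IsDSM m n A → tropdet A ≤ q * n + 2 * r - n) ∧
      (∃ A : Fin n → Fin n → ℕ, IsDSM m n A ∧ tropdet A = q * n + 2 * r - n)) := by
  subst hm
  have upper {A : Fin n → Fin n → ℕ} (hA : IsDSM (q * n + r) n A) :
      tropdet A ≤ q * n ∨ tropdet A + n ≤ q * n + 2 * r := by
    have := tropdet_le_or hA q
    rw [add_mul, one_mul] at this
    omega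
  have extremal : tropdet (fun i j => q + blockScalarOnes n r i j) = q * n + (2 * r - n) := by
    rw [tropdet_const_add, tropdet_blockScalarOnes hr]
  have hB := isDSM_const_add (isDSM_blockScalarOnes hr.le) q
  refine ⟨fun h2r => ⟨fun A hA => ?_, _, hB, by omega⟩,
    fun h2r => ⟨fun A hA => ?_, _, hB, by omega⟩⟩ <;> have := upper hA <;> omega

/-- Sharp upper bounds on tropdet over D(m,n): if m = qn + r with 0 ≤ r < n/2 then
U(m,n) = qn; if n/2 ≤ r < n then U(m,n) = qn + 2r - n. -/
theorem U_eq (m n q r : ℕ) (hn : 0 < n) (hm : m = q * n + r) (hr : r < n) :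
    (2 * r < n →
      (∀ A : Fin n → Fin n → ℕ, IsDSM m n A → tropdet A ≤ q * n) ∧
      (∃ A : Fin n → Fin n → ℕ, IsDSM m n A ∧ tropdet A = q * n)) ∧
    (n ≤ 2 * r →
      (∀ A : Fin n → Fin n → ℕ, IsDSM m n A → tropdet A ≤ q * n + 2 * r - n) ∧
      (∃ A : Fin n → Fin n → ℕ, IsDSM m n A ∧ tropdet A = q * n + 2 * r - n)) :=
  U_eq_general m n q r hm hr
end
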